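/- Let X and Y be bounded operators on a complex Hilbert space H and q ∈ ℂ with |q| ≤ 1. Then (1/2)·max{w_q(X+Y), w_q(X−Y)} ≤ w_q([[0, X],[Y, 0]]) ≤ (1/2)(‖X+Y‖ + ‖X−Y‖), where [[0,X],[Y,0]] denotes the off-diagonal 2×2 operator matrix on H ⊕ H. -/

import Mathlib

noncomputable def qNumRadius {H : Type*} [NormedAddCommGroup H] [InnerProductSpace ℂ H]
    (q : ℂ) (T : H →L[ℂ] H) : ℝ :=
  sSup {r : ℝ | ∃ x y : H, ‖x‖ = 1 ∧ ‖y‖ = 1 ∧ (inner ℂ y x : ℂ) = q ∧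
    r = ‖(inner ℂ y (T x) : ℂ)‖}

/-- The `2 × 2` block operator matrix `[[Z, X],[Y, W]]` acting on `H ⊕ H`
(the `ℓ²` direct sum `WithLp 2 (H × H)`). -/
noncomputable def block2 {H : Type*} [NormedAddCommGroup H] [InnerProductSpace ℂ H]
    (Z X Y W : H →L[ℂ] H) : WithLp 2 (H × H) →L[ℂ] WithLp 2 (H × H) :=
  (((WithLp.prodContinuousLinearEquiv 2 ℂ H H).symm : (H × H) →L[ℂ] WithLp 2 (H × H)).comp
    ((Z.comp (ContinuousLinearMap.fst ℂ H H) + X.comp (ContinuousLinearMap.snd ℂ H H)).prod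
      (Y.comp (ContinuousLinearMap.fst ℂ H H) + W.comp (ContinuousLinearMap.snd ℂ H H)))).comp
    ((WithLp.prodContinuousLinearEquiv 2 ℂ H H : WithLp 2 (H × H) →L[ℂ] (H × H)))

/-!
Upper bound: `w_q(T) ≤ ‖T‖`, and `[[0, X], [Y, 0]]` is the average of `[[0, X + Y], [X + Y, 0]]`
and `[[0, X - Y], [-(X - Y), 0]]`, each of which has the norm of its off-diagonal entry.

Lower bound: if `‖x‖ = ‖y‖ = 1`, `⟪y, x⟫ = q` and `|ζ| = 1`, then `u = (x, ζ x) / √2` and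
`v = (y, ζ y) / √2` are again unit vectors with `⟪v, u⟫ = q`, and
`⟪v, [[0, X], [Y, 0]] u⟫ = (ζ ⟪y, X x⟫ + ζ̄ ⟪y, Y x⟫) / 2`.
Taking `ζ = 1` gives `w_q(X + Y)`, and `ζ = i` gives `w_q(X - Y)`.
-/

open ContinuousLinearMap WithLp
open scoped InnerProductSpace ComplexConjugate

section

variable {H : Type*} [NormedAddCommGroup H] [InnerProductSpace ℂ H]

section QNumRadius

variable (q : ℂ) (T : H →L[ℂ] H)

lemma norm_inner_apply_le_opNorm (x y : H) : ‖⟪y, T x⟫_ℂ‖ ≤ ‖T‖ * (‖y‖ * ‖x‖) :=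
  calc ‖⟪y, T x⟫_ℂ‖ ≤ ‖y‖ * ‖T x‖ := norm_inner_le_norm _ _
    _ ≤ ‖y‖ * (‖T‖ * ‖x‖) := by gcongr; exact T.le_opNorm x
    _ = ‖T‖ * (‖y‖ * ‖x‖) := by ring

lemma qNumRadius_nonneg : 0 ≤ qNumRadius q T :=
  Real.sSup_nonneg fun _ ⟨_, _, _, _, _, hr⟩ => hr ▸ norm_nonneg _

lemma qNumRadius_le {c : ℝ} (hc : 0 ≤ c)
    (h : ∀ x y : H, ‖x‖ = 1 → ‖y‖ = 1 → ⟪y, x⟫_ℂ = q → ‖⟪y, T x⟫_ℂ‖ ≤ c) :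
    qNumRadius q T ≤ c :=
  Real.sSup_le (fun _ ⟨x, y, hx, hy, hxy, hr⟩ => hr ▸ h x y hx hy hxy) hc

lemma qNumRadius_le_opNorm : qNumRadius q T ≤ ‖T‖ :=
  qNumRadius_le q T (norm_nonneg T) fun x y hx hy _ => by
    simpa [hx, hy] using norm_inner_apply_le_opNorm T x y

lemma norm_inner_apply_le_qNumRadius {x y : H} (hx : ‖x‖ = 1) (hy : ‖y‖ = 1)
    (hxy : ⟪y, x⟫_ℂ = q) : ‖⟪y, T x⟫_ℂ‖ ≤ qNumRadius q T :=
  le_csSup ⟨‖T‖, fun _ ⟨x, y, hx, hy, _, hr⟩ => by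
    simpa [hr, hx, hy] using norm_inner_apply_le_opNorm T x y⟩ ⟨x, y, hx, hy, hxy, rfl⟩

end QNumRadius

section Block2

@[simp]
lemma block2_apply (Z X Y W : H →L[ℂ] H) (u : WithLp 2 (H × H)) :
    block2 Z X Y W u = toLp 2 (Z u.fst + X u.snd, Y u.fst + W u.snd) := rfl

lemma block2_zero_eq_half_smul_add (X Y : H →L[ℂ] H) :
    block2 0 X Y 0 =
      (2⁻¹ : ℂ) • block2 0 (X + Y) (X + Y) 0 + (2⁻¹ : ℂ) • block2 0 (X - Y) (-(X - Y)) 0 := by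
  ext u : 1
  simp only [add_apply, smul_apply, block2_apply, ← toLp_add, ← toLp_smul]
  congr 1
  ext <;> simp <;> module

lemma norm_block2_zero_le (A B : H →L[ℂ] H) : ‖block2 0 A B 0‖ ≤ max ‖A‖ ‖B‖ := by
  refine opNorm_le_bound _ (by positivity) fun u => ?_
  rw [← sq_le_sq₀ (norm_nonneg _) (by positivity), mul_pow, prod_norm_sq_eq_of_L2,
    prod_norm_sq_eq_of_L2]
  have hA : ‖A u.snd‖ ≤ max ‖A‖ ‖B‖ * ‖u.snd‖ :=
    (A.le_opNorm _).trans (by gcongr; exact le_max_left _ _)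
  have hB : ‖B u.fst‖ ≤ max ‖A‖ ‖B‖ * ‖u.fst‖ :=
    (B.le_opNorm _).trans (by gcongr; exact le_max_right _ _)
  simp only [block2_apply, toLp_fst, toLp_snd, zero_apply, zero_add, add_zero]
  nlinarith [pow_le_pow_left₀ (norm_nonneg _) hA 2, pow_le_pow_left₀ (norm_nonneg _) hB 2]

variable (a b : ℂ) (x y : H)

lemma norm_toLp_smul_smul_sq : ‖toLp 2 (a • x, b • x)‖ ^ 2 = (‖a‖ ^ 2 + ‖b‖ ^ 2) * ‖x‖ ^ 2 := by
  rw [prod_norm_sq_eq_of_L2]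
  simp only [toLp_fst, toLp_snd, norm_smul]
  ring

lemma inner_toLp_smul_smul :
    ⟪toLp 2 (a • y, b • y), toLp 2 (a • x, b • x)⟫_ℂ = (‖a‖ ^ 2 + ‖b‖ ^ 2 : ℂ) * ⟪y, x⟫_ℂ := by
  simp only [prod_inner_apply, inner_smul_left, inner_smul_right]
  rw [← Complex.conj_mul' a, ← Complex.conj_mul' b]
  ring

lemma inner_toLp_smul_smul_block2 (X Y : H →L[ℂ] H) :
    ⟪toLp 2 (a • y, b • y), block2 0 X Y 0 (toLp 2 (a • x, b • x))⟫_ℂ =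
      conj a * b * ⟪y, X x⟫_ℂ + conj b * a * ⟪y, Y x⟫_ℂ := by
  simp only [block2_apply, prod_inner_apply, toLp_fst, toLp_snd, zero_apply, map_smul, smul_zero,
    zero_add, add_zero, inner_smul_left, inner_smul_right]
  ring

end Block2

variable (q : ℂ) (X Y : H →L[ℂ] H)

lemma norm_inner_block2_le_qNumRadius {a b : ℂ} (hab : ‖a‖ ^ 2 + ‖b‖ ^ 2 = 1) {x y : H}
    (hx : ‖x‖ = 1) (hy : ‖y‖ = 1) (hxy : ⟪y, x⟫_ℂ = q) :
    ‖conj a * b * ⟪y, X x⟫_ℂ + conj b * a * ⟪y, Y x⟫_ℂ‖ ≤ qNumRadius q (block2 0 X Y 0) := by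
  have hunit : ∀ z : H, ‖z‖ = 1 → ‖toLp 2 (a • z, b • z)‖ = 1 := fun z hz =>
    (pow_eq_one_iff_of_nonneg (norm_nonneg _) two_ne_zero).1 <| by
      rw [norm_toLp_smul_smul_sq, hab, hz]; simp
  rw [← inner_toLp_smul_smul_block2]
  refine norm_inner_apply_le_qNumRadius q _ (hunit x hx) (hunit y hy) ?_
  rw [inner_toLp_smul_smul, hxy]
  norm_cast
  rw [hab, Complex.ofReal_one, one_mul]

lemma qNumRadius_block2_zero_le : qNumRadius q (block2 0 X Y 0) ≤ 1 / 2 * (‖X + Y‖ + ‖X - Y‖) := by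
  have hplus := norm_block2_zero_le (X + Y) (X + Y)
  have hminus := norm_block2_zero_le (X - Y) (-(X - Y))
  rw [max_self] at hplus
  rw [norm_neg, max_self] at hminus
  calc qNumRadius q (block2 0 X Y 0) ≤ ‖block2 0 X Y 0‖ := qNumRadius_le_opNorm q _
    _ ≤ ‖(2⁻¹ : ℂ)‖ * ‖block2 0 (X + Y) (X + Y) 0‖ +
          ‖(2⁻¹ : ℂ)‖ * ‖block2 0 (X - Y) (-(X - Y)) 0‖ := by
      rw [block2_zero_eq_half_smul_add]
      exact (opNorm_add_le _ _).trans (add_le_add (opNorm_smul_le _ _) (opNorm_smul_le _ _))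
    _ ≤ 1 / 2 * (‖X + Y‖ + ‖X - Y‖) := by
      rw [norm_inv, Complex.norm_ofNat]
      linarith

lemma norm_rotated_inner_le_two_mul_qNumRadius_block2 {ζ : ℂ} (hζ : ‖ζ‖ = 1) {x y : H}
    (hx : ‖x‖ = 1) (hy : ‖y‖ = 1) (hxy : ⟪y, x⟫_ℂ = q) :
    ‖ζ * ⟪y, X x⟫_ℂ + conj ζ * ⟪y, Y x⟫_ℂ‖ ≤ 2 * qNumRadius q (block2 0 X Y 0) := by
  set r : ℝ := √2⁻¹
  have hr : r ^ 2 = 2⁻¹ := Real.sq_sqrt (by norm_num)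
  have hab : ‖(r : ℂ)‖ ^ 2 + ‖(r : ℂ) * ζ‖ ^ 2 = 1 := by
    rw [norm_mul, hζ, mul_one, Complex.norm_real, Real.norm_eq_abs, sq_abs, hr]
    norm_num
  have h := norm_inner_block2_le_qNumRadius q X Y hab hx hy hxy
  have hr' : (r : ℂ) ^ 2 = 2⁻¹ := by rw [← Complex.ofReal_pow, hr]; norm_num
  rw [map_mul, Complex.conj_ofReal,
    show ↑r * (↑r * ζ) * ⟪y, X x⟫_ℂ + ↑r * conj ζ * ↑r * ⟪y, Y x⟫_ℂ =
      (2⁻¹ : ℂ) * (ζ * ⟪y, X x⟫_ℂ + conj ζ * ⟪y, Y x⟫_ℂ) by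
        linear_combination (ζ * ⟪y, X x⟫_ℂ + conj ζ * ⟪y, Y x⟫_ℂ) * hr',
    norm_mul, norm_inv, Complex.norm_ofNat] at h
  linarith

lemma qNumRadius_add_le_two_mul_qNumRadius_block2 :
    qNumRadius q (X + Y) ≤ 2 * qNumRadius q (block2 0 X Y 0) :=
  qNumRadius_le q _ (mul_nonneg zero_le_two (qNumRadius_nonneg q _)) fun x y hx hy hxy => by
    simpa [inner_add_right] using
      norm_rotated_inner_le_two_mul_qNumRadius_block2 q X Y (ζ := 1) (by simp) hx hy hxy

lemma qNumRadius_sub_le_two_mul_qNumRadius_block2 :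
    qNumRadius q (X - Y) ≤ 2 * qNumRadius q (block2 0 X Y 0) :=
  qNumRadius_le q _ (mul_nonneg zero_le_two (qNumRadius_nonneg q _)) fun x y hx hy hxy => by
    have h := norm_rotated_inner_le_two_mul_qNumRadius_block2 q X Y (ζ := Complex.I) (by simp)
      hx hy hxy
    rwa [Complex.conj_I, neg_mul, ← sub_eq_add_neg, ← mul_sub, norm_mul, Complex.norm_I, one_mul,
      ← inner_sub_right] at h

end

theorem stmt12_general {H : Type*} [NormedAddCommGroup H] [InnerProductSpace ℂ H]
    (X Y : H →L[ℂ] H) (q : ℂ) :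
    (1 / 2) * max (qNumRadius q (X + Y)) (qNumRadius q (X - Y)) ≤
        qNumRadius q (block2 0 X Y 0) ∧
      qNumRadius q (block2 0 X Y 0) ≤ (1 / 2) * (‖X + Y‖ + ‖X - Y‖) := by
  refine ⟨?_, qNumRadius_block2_zero_le q X Y⟩
  have := max_le (qNumRadius_add_le_two_mul_qNumRadius_block2 q X Y)
    (qNumRadius_sub_le_two_mul_qNumRadius_block2 q X Y)
  linarith

theorem stmt12 {H : Type*} [NormedAddCommGroup H] [InnerProductSpace ℂ H]
    (X Y : H →L[ℂ] H) (q : ℂ) (hq : ‖q‖ ≤ 1) :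
    (1 / 2) * max (qNumRadius q (X + Y)) (qNumRadius q (X - Y)) ≤
        qNumRadius q (block2 0 X Y 0) ∧
      qNumRadius q (block2 0 X Y 0) ≤ (1 / 2) * (‖X + Y‖ + ‖X - Y‖) :=
  stmt12_general X Y q
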